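/- Let X be a paracompact Hausdorff space and F = {F_i}_{i∈I} a locally finite closed family of subsets of X. Then there exists a locally finite open family U = {U_i}_{i∈I} of subsets of X with F_i ⊂ U_i for every i ∈ I. -/

import Mathlib

/-!
Refine the cover of `X` by interiors of closed neighbourhoods meeting only finitely many `F i` to a
locally finite cover `W`, so that each `closure (W a)` meets only finitely many `F i`. Let `U i` be
`X` minus every `closure (W a)` disjoint from `F i`: it contains `F i`, and it is open because a
locally finite union of closed sets is closed. If `U i` meets `W a`, then `closure (W a)` meets
`F i`; since only finitely many `W a` come near a given point, so do only finitely many `U i`.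
-/

open Set

section Swelling

variable {X α ι : Type*} [TopologicalSpace X]

def swelling (W : α → Set X) (s : Set X) : Set X :=
  (⋃ a : {a // Disjoint (closure (W a)) s}, closure (W a.1))ᶜ

theorem subset_swelling (W : α → Set X) (s : Set X) : s ⊆ swelling W s := by
  rintro x hx hmem
  obtain ⟨⟨a, hdisj⟩, hxa⟩ := mem_iUnion.1 hmem
  exact disjoint_left.1 hdisj hxa hx

theorem LocallyFinite.isOpen_swelling {W : α → Set X} (hW : LocallyFinite W) (s : Set X) :
    IsOpen (swelling W s) :=
  ((hW.closure.comp_injective Subtype.val_injective).isClosed_iUnion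
    fun _ => isClosed_closure).isOpen_compl

theorem closure_inter_nonempty_of_mem_swelling {W : α → Set X} {s : Set X} {a : α} {y : X}
    (hy : y ∈ swelling W s) (ha : y ∈ W a) : (closure (W a) ∩ s).Nonempty := by
  by_contra hempty
  exact hy (mem_iUnion.2
    ⟨⟨a, disjoint_iff_inter_eq_empty.2 (not_nonempty_iff_eq_empty.1 hempty)⟩, subset_closure ha⟩)

theorem LocallyFinite.locallyFinite_swelling {W : α → Set X} (hW : LocallyFinite W)
    (hcov : ⋃ a, W a = univ) {F : ι → Set X}
    (hfin : ∀ a, {i | (closure (W a) ∩ F i).Nonempty}.Finite) :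
    LocallyFinite fun i => swelling W (F i) := by
  intro x
  obtain ⟨N, hN, hNfin⟩ := hW x
  refine ⟨N, hN, (hNfin.biUnion fun a _ => hfin a).subset ?_⟩
  rintro i ⟨y, hyU, hyN⟩
  obtain ⟨a, hya⟩ := mem_iUnion.1 (hcov ▸ mem_univ y)
  exact mem_iUnion₂.2 ⟨a, ⟨y, hya, hyN⟩, closure_inter_nonempty_of_mem_swelling hyU hya⟩

end Swelling

theorem LocallyFinite.exists_locallyFinite_cover_closure_meets_finite {X ι : Type*}
    [TopologicalSpace X] [ParacompactSpace X] [RegularSpace X] {F : ι → Set X}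
    (hF : LocallyFinite F) :
    ∃ W : X → Set X, ⋃ a, W a = univ ∧ LocallyFinite W ∧
      ∀ a, {i | (closure (W a) ∩ F i).Nonempty}.Finite := by
  choose s hs hsfin using fun x => hF.exists_mem_basis (closed_nhds_basis x)
  obtain ⟨W, -, hWcov, hWlf, hWs⟩ := precise_refinement (fun x => interior (s x))
    (fun _ => isOpen_interior)
    (iUnion_eq_univ_iff.2 fun x => ⟨x, mem_interior_iff_mem_nhds.2 (hs x).1⟩)
  refine ⟨W, hWcov, hWlf, fun a => (hsfin a).subset ?_⟩
  have hclosure : closure (W a) ⊆ s a := closure_minimal ((hWs a).trans interior_subset) (hs a).2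
  rintro i ⟨y, hyW, hyF⟩
  exact ⟨y, hyF, hclosure hyW⟩

theorem exists_locallyFinite_open_swelling
    {X : Type*} [TopologicalSpace X] [ParacompactSpace X] [T2Space X] {I : Type*}
    (F : I → Set X) (hFlf : LocallyFinite F) :
    ∃ U : I → Set X, (∀ i, IsOpen (U i)) ∧ LocallyFinite U ∧ ∀ i, F i ⊆ U i := by
  obtain ⟨W, hWcov, hWlf, hWfin⟩ := hFlf.exists_locallyFinite_cover_closure_meets_finite
  exact ⟨fun i => swelling W (F i), fun i => hWlf.isOpen_swelling (F i),
    hWlf.locallyFinite_swelling hWcov hWfin, fun i => subset_swelling W (F i)⟩
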